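/- arXiv:1703.00931 — 4 statements merged into one kernel-verified Lean document; each statement's English description precedes it below -/
import Mathlib

section
/- Let B > 0 and 0 < ξ < 1/B be reals, let S be a submartingale with |ΔS(s)(x)| ≤ B for all situations s and x ∈ {0,1}, and let σ : {0,1}* → {0,1} be a selection process. Define P(x₁…xₙ) := ∏_{k=0}^{n−1} [1 − ξ·σ(x₁…x_k)·ΔS(x₁…x_k)(x_{k+1})]. Then P is a positive supermartingale with P(□) = 1, i.e. a test supermartingale. -/
/-- Expectation of a gamble `f : Bool → ℝ` under a precise forecast `p`. -/
noncomputable def pexp (p : ℝ) (f : Bool → ℝ) : ℝ := p * f true + (1 - p) * f false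

/-- Lower expectation associated with the interval forecast `[a, b]`. -/
noncomputable def lexp (a b : ℝ) (f : Bool → ℝ) : ℝ :=
  sInf ((fun p => pexp p f) '' Set.Icc a b)

/-- Upper expectation associated with the interval forecast `[a, b]`. -/
noncomputable def uexp (a b : ℝ) (f : Bool → ℝ) : ℝ :=
  sSup ((fun p => pexp p f) '' Set.Icc a b)

/-!
The multiplicative factor `1 - ξ σ(s) ΔS(s)(x)` is at least `1 - ξB > 0`, so `P` stays
positive, and `ΔP(s) = -ξ σ(s) P(s) ΔS(s)`. By conjugacy and non-negative homogeneity of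
the interval expectations, `Ē(ΔP(s)) = -ξ σ(s) P(s) E̲(ΔS(s)) ≤ 0`.
-/

open Set
open scoped Pointwise

theorem pexp_neg (p : ℝ) (f : Bool → ℝ) : pexp p (-f) = -pexp p f := by
  simp only [pexp, Pi.neg_apply]
  ring

theorem pexp_smul (p c : ℝ) (f : Bool → ℝ) : pexp p (c • f) = c * pexp p f := by
  simp only [pexp, Pi.smul_apply, smul_eq_mul]
  ring

theorem uexp_neg (a b : ℝ) (f : Bool → ℝ) : uexp a b (-f) = -lexp a b f := by
  have himage : (fun p => pexp p (-f)) '' Icc a b = -((fun p => pexp p f) '' Icc a b) := by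
    rw [← image_neg_eq_neg, image_image]
    simp only [pexp_neg]
  rw [uexp, himage, Real.sSup_neg, lexp]

theorem lexp_smul {c : ℝ} (hc : 0 ≤ c) (a b : ℝ) (f : Bool → ℝ) :
    lexp a b (c • f) = c * lexp a b f := by
  have himage : (fun p => pexp p (c • f)) '' Icc a b = c • ((fun p => pexp p f) '' Icc a b) := by
    rw [← image_smul, image_image]
    simp only [pexp_smul, smul_eq_mul]
  rw [lexp, himage, Real.sInf_smul_of_nonneg hc, lexp, smul_eq_mul]

theorem uexp_neg_smul_nonpos {a b c : ℝ} {f : Bool → ℝ} (hc : 0 ≤ c) (hf : 0 ≤ lexp a b f) :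
    uexp a b (-(c • f)) ≤ 0 := by
  rw [uexp_neg, lexp_smul hc, neg_nonpos]
  exact mul_nonneg hc hf

theorem one_sub_mul_pos {ξ B t d : ℝ} (hξ : 0 ≤ ξ) (hξB : ξ * B < 1) (ht : 0 ≤ t)
    (ht1 : t ≤ 1) (hd : |d| ≤ B) : 0 < 1 - ξ * t * d := by
  have htd : t * d ≤ B :=
    calc t * d ≤ t * |d| := mul_le_mul_of_nonneg_left (le_abs_self d) ht
      _ ≤ 1 * B := mul_le_mul ht1 hd (abs_nonneg d) zero_le_one
      _ = B := one_mul B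
  have : ξ * (t * d) ≤ ξ * B := mul_le_mul_of_nonneg_left htd hξ
  linarith

theorem List.pos_of_mul_append_singleton {α : Type*} {P : List α → ℝ} (g : List α → α → ℝ)
    (h0 : 0 < P []) (hg : ∀ s x, 0 < g s x) (hP : ∀ s x, P (s ++ [x]) = P s * g s x) :
    ∀ s, 0 < P s := by
  intro s
  induction s using List.reverseRecOn with
  | nil => exact h0
  | append_singleton t x ih => rw [hP t x]; exact mul_pos ih (hg t x)

theorem stmt7_general (B ξ : ℝ) (hB : 0 < B) (hξ0 : 0 < ξ) (hξB : ξ < 1 / B)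
    (lo hi : List Bool → ℝ)
    (S : List Bool → ℝ)
    (hsub : ∀ s, 0 ≤ lexp (lo s) (hi s) (fun x => S (s ++ [x]) - S s))
    (hSB : ∀ s x, |S (s ++ [x]) - S s| ≤ B)
    (σ : List Bool → ℝ) (hσ : ∀ s, σ s = 0 ∨ σ s = 1)
    (P : List Bool → ℝ)
    (hP0 : P [] = 1)
    (hPrec : ∀ s x, P (s ++ [x]) = P s * (1 - ξ * σ s * (S (s ++ [x]) - S s))) :
    (∀ s, 0 < P s) ∧ P [] = 1 ∧
      ∀ s, uexp (lo s) (hi s) (fun x => P (s ++ [x]) - P s) ≤ 0 := by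
  have hξB' : ξ * B < 1 := (lt_div_iff₀ hB).mp hξB
  have hσ01 : ∀ s, 0 ≤ σ s ∧ σ s ≤ 1 := fun s => by rcases hσ s with h | h <;> simp [h]
  have hPpos : ∀ s, 0 < P s :=
    List.pos_of_mul_append_singleton _ (hP0 ▸ one_pos)
      (fun s x => one_sub_mul_pos hξ0.le hξB' (hσ01 s).1 (hσ01 s).2 (hSB s x)) hPrec
  refine ⟨hPpos, hP0, fun s => ?_⟩
  have hΔP : (fun x => P (s ++ [x]) - P s) =
      -((ξ * σ s * P s) • fun x => S (s ++ [x]) - S s) := by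
    funext x
    simp only [hPrec, Pi.neg_apply, Pi.smul_apply, smul_eq_mul]
    ring
  rw [hΔP]
  exact uexp_neg_smul_nonpos (mul_nonneg (mul_nonneg hξ0.le (hσ01 s).1) (hPpos s).le) (hsub s)

/-- Let `B > 0` and `0 < ξ < 1/B`, let `S` be a submartingale for the forecasting
system `Γ` (with bounds `lo ≤ hi`) whose differences are uniformly bounded by `B`,
and let `σ` be a selection process (with values in `{0,1}`). Then the process `P`
determined by `P(□) = 1` and `P(sx) = P(s)·(1 − ξ·σ(s)·ΔS(s)(x))` is a positive
supermartingale with `P(□) = 1`, i.e. a test supermartingale for `Γ`. -/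
theorem stmt7 (B ξ : ℝ) (hB : 0 < B) (hξ0 : 0 < ξ) (hξB : ξ < 1 / B)
    (lo hi : List Bool → ℝ)
    (hΓ : ∀ s, 0 ≤ lo s ∧ lo s ≤ hi s ∧ hi s ≤ 1)
    (S : List Bool → ℝ)
    (hsub : ∀ s, 0 ≤ lexp (lo s) (hi s) (fun x => S (s ++ [x]) - S s))
    (hSB : ∀ s x, |S (s ++ [x]) - S s| ≤ B)
    (σ : List Bool → ℝ) (hσ : ∀ s, σ s = 0 ∨ σ s = 1)
    (P : List Bool → ℝ)
    (hP0 : P [] = 1)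
    (hPrec : ∀ s x, P (s ++ [x]) = P s * (1 - ξ * σ s * (S (s ++ [x]) - S s))) :
    (∀ s, 0 < P s) ∧ P [] = 1 ∧
      ∀ s, uexp (lo s) (hi s) (fun x => P (s ++ [x]) - P s) ≤ 0 :=
  stmt7_general B ξ hB hξ0 hξB lo hi S hsub hSB σ hσ P hP0 hPrec
end

section
/- Let B > 0, 0 < ε < B, ξ := ε/(2B²), let S be a real process with S(□)=0 and |ΔS(s)(x)| ≤ B for all s, x, and let σ : {0,1}* → {0,1}. Define P(x₁…xₙ) := ∏_{k=0}^{n−1}[1 − ξ σ(x₁…x_k) ΔS(x₁…x_k)(x_{k+1})]. If the σ-weighted average A(x₁…xₙ) := (∑_{k=0}^{n−1} σ(x₁…x_k) ΔS(x₁…x_k)(x_{k+1})) / (∑_{k=0}^{n−1} σ(x₁…x_k)) satisfies A(x₁…xₙ) ≤ −ε (with positive denominator), then P(x₁…xₙ) ≥ exp( (ε²/(4B²)) · ∑_{k=0}^{n−1} σ(x₁…x_k) ). -/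
/-!
Each factor of `P` is `1 + t` with `t = -ξ σ ΔS` and `|t| ≤ ξ B < 1/2`, so `ln (1 + t) ≥ t - t²`.
Since `σ² = σ`, summing gives `ln P ≥ -ξ ∑ σ ΔS - ξ² B² ∑ σ`, and the hypothesis on the weighted
average, `∑ σ ΔS ≤ -ε ∑ σ`, turns this into `(ξ ε - ξ² B²) ∑ σ = (ε² / (4 B²)) ∑ σ`.
-/

open Finset Real

theorem Real.exp_sub_sq_le_one_add {t : ℝ} (ht : -(1 / 2) ≤ t) : exp (t - t ^ 2) ≤ 1 + t := by
  have hpos : 0 < 1 + t := by linarith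
  have hinv : (1 + t)⁻¹ ≤ exp (t ^ 2 - t) := by
    rw [inv_le_iff_one_le_mul₀ hpos]
    rcases le_or_gt t 0 with ht0 | ht0
    · have hx : 0 ≤ t ^ 2 - t := by nlinarith
      have := quadratic_le_exp_of_nonneg hx
      nlinarith [sq_nonneg t, sq_nonneg (1 + t)]
    · have := add_one_le_exp (t ^ 2 - t)
      nlinarith [sq_nonneg t]
  calc exp (t - t ^ 2) = (exp (t ^ 2 - t))⁻¹ := by rw [← exp_neg, neg_sub]
    _ ≤ 1 + t := inv_le_of_inv_le₀ hpos hinv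

theorem Real.exp_neg_sub_sq_le_one_sub {y b : ℝ} (hy : |y| ≤ b) (hb : b ≤ 1 / 2) :
    exp (-y - b ^ 2) ≤ 1 - y := by
  obtain ⟨hyl, hyu⟩ := abs_le.mp hy
  have hsq : y ^ 2 ≤ b ^ 2 := sq_le_sq' hyl hyu
  calc exp (-y - b ^ 2) ≤ exp (-y - (-y) ^ 2) := exp_le_exp.mpr (by nlinarith)
    _ ≤ 1 + -y := exp_sub_sq_le_one_add (by linarith)
    _ = 1 - y := by ring

theorem Real.exp_mul_le_one_sub_mul_of_eq_zero_or_one {c y b : ℝ} (hc : c = 0 ∨ c = 1)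
    (hy : |y| ≤ b) (hb : b ≤ 1 / 2) : exp (c * (-y - b ^ 2)) ≤ 1 - c * y := by
  rcases hc with rfl | rfl
  · simp
  · simpa using exp_neg_sub_sq_le_one_sub hy hb

theorem abs_sub_take_succ_le {S : List Bool → ℝ} {B : ℝ} (hSB : ∀ s x, |S (s ++ [x]) - S s| ≤ B)
    {s : List Bool} {k : ℕ} (hk : k < s.length) : |S (s.take (k + 1)) - S (s.take k)| ≤ B := by
  rw [← List.take_concat_get' s k hk]
  exact hSB _ _

theorem stmt8_general (B ε : ℝ) (hB : 0 < B) (hε0 : 0 < ε) (hεB : ε < B)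
    (S : List Bool → ℝ)
    (hSB : ∀ s x, |S (s ++ [x]) - S s| ≤ B)
    (σ : List Bool → ℝ) (hσ : ∀ s, σ s = 0 ∨ σ s = 1)
    (s : List Bool)
    (hden : 0 < ∑ k ∈ Finset.range s.length, σ (s.take k))
    (hA : (∑ k ∈ Finset.range s.length,
            σ (s.take k) * (S (s.take (k + 1)) - S (s.take k))) /
          (∑ k ∈ Finset.range s.length, σ (s.take k)) ≤ -ε) :
    Real.exp (ε ^ 2 / (4 * B ^ 2) * ∑ k ∈ Finset.range s.length, σ (s.take k)) ≤
      ∏ k ∈ Finset.range s.length,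
        (1 - ε / (2 * B ^ 2) * σ (s.take k) * (S (s.take (k + 1)) - S (s.take k))) := by
  set ξ := ε / (2 * B ^ 2) with hξ
  set Δ := fun k => S (s.take (k + 1)) - S (s.take k)
  have hξ0 : 0 < ξ := by positivity
  have hξB : ξ * B ≤ 1 / 2 := by
    rw [hξ, div_mul_eq_mul_div, div_le_iff₀ (by positivity)]
    nlinarith
  have hfactor : ∀ k ∈ range s.length,
      exp (σ (s.take k) * (-(ξ * Δ k) - (ξ * B) ^ 2)) ≤ 1 - ξ * σ (s.take k) * Δ k := by
    intro k hk
    have hΔ : |ξ * Δ k| ≤ ξ * B := by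
      rw [abs_mul, abs_of_pos hξ0]
      exact mul_le_mul_of_nonneg_left (abs_sub_take_succ_le hSB (mem_range.mp hk)) hξ0.le
    calc _ ≤ 1 - σ (s.take k) * (ξ * Δ k) :=
          exp_mul_le_one_sub_mul_of_eq_zero_or_one (hσ _) hΔ hξB
      _ = _ := by ring
  have hweighted :
      ∑ k ∈ range s.length, σ (s.take k) * Δ k ≤ -ε * ∑ k ∈ range s.length, σ (s.take k) :=
    (div_le_iff₀ hden).mp hA
  have hexponent : ε ^ 2 / (4 * B ^ 2) * ∑ k ∈ range s.length, σ (s.take k) ≤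
      ∑ k ∈ range s.length, σ (s.take k) * (-(ξ * Δ k) - (ξ * B) ^ 2) := by
    have hcoef : ε ^ 2 / (4 * B ^ 2) = ξ * ε - (ξ * B) ^ 2 := by
      rw [hξ]; field_simp; ring
    have hsum : ∑ k ∈ range s.length, σ (s.take k) * (-(ξ * Δ k) - (ξ * B) ^ 2) =
        -ξ * ∑ k ∈ range s.length, σ (s.take k) * Δ k -
          (ξ * B) ^ 2 * ∑ k ∈ range s.length, σ (s.take k) := by
      rw [mul_sum, mul_sum, ← sum_sub_distrib]
      exact sum_congr rfl fun _ _ => by ring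
    rw [hcoef, hsum]
    nlinarith [mul_le_mul_of_nonneg_left hweighted hξ0.le]
  calc _ ≤ exp (∑ k ∈ range s.length, σ (s.take k) * (-(ξ * Δ k) - (ξ * B) ^ 2)) :=
        exp_le_exp.mpr hexponent
    _ = ∏ k ∈ range s.length, exp (σ (s.take k) * (-(ξ * Δ k) - (ξ * B) ^ 2)) := exp_sum _ _
    _ ≤ _ := prod_le_prod (fun _ _ => (exp_pos _).le) hfactor

/-- Let `B > 0`, `0 < ε < B`, `ξ := ε/(2B²)`, let `S` be a real process on binary strings
with `S(□) = 0` and differences bounded by `B`, and let `σ` be a `{0,1}`-valued selection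
process. If along a situation `s = x₁…xₙ` the `σ`-weighted average of the differences of
`S` is at most `−ε` (with positive denominator), then the product process
`P(s) = ∏_{k<n} (1 − ξ·σ(x₁…x_k)·ΔS(x₁…x_k)(x_{k+1}))` satisfies
`P(s) ≥ exp((ε²/(4B²))·∑_{k<n} σ(x₁…x_k))`. -/
theorem stmt8 (B ε : ℝ) (hB : 0 < B) (hε0 : 0 < ε) (hεB : ε < B)
    (S : List Bool → ℝ) (hS0 : S [] = 0)
    (hSB : ∀ s x, |S (s ++ [x]) - S s| ≤ B)
    (σ : List Bool → ℝ) (hσ : ∀ s, σ s = 0 ∨ σ s = 1)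
    (s : List Bool)
    (hden : 0 < ∑ k ∈ Finset.range s.length, σ (s.take k))
    (hA : (∑ k ∈ Finset.range s.length,
            σ (s.take k) * (S (s.take (k + 1)) - S (s.take k))) /
          (∑ k ∈ Finset.range s.length, σ (s.take k)) ≤ -ε) :
    Real.exp (ε ^ 2 / (4 * B ^ 2) * ∑ k ∈ Finset.range s.length, σ (s.take k)) ≤
      ∏ k ∈ Finset.range s.length,
        (1 - ε / (2 * B ^ 2) * σ (s.take k) * (S (s.take (k + 1)) - S (s.take k))) :=
  stmt8_general B ε hB hε0 hεB S hSB σ hσ s hden hA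
end

section
/- Let pₙ := 1/2 + (−1)ⁿ δₙ with δₙ := e^{−1/(n+1)}√(e^{1/(n+1)} − 1), and define the multiplier values M(n)(x) := e^{1/(2(n+1))} √(2 qₙ(x)) and N(n)(x) := e^{1/(2(n+1))} / √(2 qₙ(x)) for x ∈ {0,1}, where qₙ(1) := pₙ, qₙ(0) := 1 − pₙ. Then for all n ≥ 1: (1/2)M(n)(1) + (1/2)M(n)(0) = 1 and pₙ N(n)(1) + (1 − pₙ) N(n)(0) = 1. -/
/-!
Write `u = e^{-c}` with `c = 1/(n+1)`. Then `δ² = u - u²`, so `p(1 - p) = 1/4 - δ² = (u - 1/2)²`,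
and since `u ≥ 1 - c ≥ 1/2` we get `√p √(1-p) = u - 1/2`, whence
`(√p + √(1-p))² = 2u`. Both weighted sums equal `e^{c/2}(√p + √(1-p))/√2 = e^{c/2}√u = 1`.
-/

open Real

lemma sq_exp_neg_mul_sqrt_exp_sub_one {c : ℝ} (hc : 0 ≤ c) :
    (exp (-c) * √(exp c - 1)) ^ 2 = exp (-c) - exp (-c) ^ 2 := by
  have h : exp (-c) * exp c = 1 := by rw [← exp_add, neg_add_cancel, exp_zero]
  rw [mul_pow, sq_sqrt (by linarith [one_le_exp hc])]
  linear_combination exp (-c) * h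

lemma half_add_neg_one_pow_mul_mul_one_sub (n : ℕ) (δ : ℝ) :
    (1 / 2 + (-1) ^ n * δ) * (1 - (1 / 2 + (-1) ^ n * δ)) = 1 / 4 - δ ^ 2 := by
  rcases neg_one_pow_eq_or ℝ n with h | h <;> rw [h] <;> ring

lemma sq_sqrt_add_sqrt_one_sub {p : ℝ} (h0 : 0 ≤ p) (h1 : p ≤ 1) :
    (√p + √(1 - p)) ^ 2 = 1 + 2 * √(p * (1 - p)) := by
  rw [add_sq, sq_sqrt h0, sq_sqrt (by linarith), sqrt_mul h0]
  ring

lemma sqrt_add_sqrt_one_sub_of_mul_one_sub_eq {p u : ℝ} (hu : 1 / 2 ≤ u)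
    (hp : p * (1 - p) = (u - 1 / 2) ^ 2) : √p + √(1 - p) = √(2 * u) := by
  have h0 : 0 ≤ p := by nlinarith [sq_nonneg (u - 1 / 2)]
  have h1 : p ≤ 1 := by nlinarith [sq_nonneg (u - 1 / 2)]
  have hsq : (√p + √(1 - p)) ^ 2 = 2 * u := by
    rw [sq_sqrt_add_sqrt_one_sub h0 h1, hp, sqrt_sq (by linarith)]
    ring
  rw [← hsq, sqrt_sq (by positivity)]

lemma div_sqrt_two_mul (x : ℝ) : x / √(2 * x) = √x / √2 := by
  rw [sqrt_mul zero_le_two, mul_comm, ← div_div, div_sqrt]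

lemma half_mul_sqrt_two_mul_add (k p : ℝ) :
    1 / 2 * (k * √(2 * p)) + 1 / 2 * (k * √(2 * (1 - p))) = k * (√p + √(1 - p)) / √2 := by
  rw [sqrt_mul zero_le_two, sqrt_mul zero_le_two]
  field_simp
  rw [sq_sqrt zero_le_two]
  ring

lemma mul_div_sqrt_two_mul_add (k p : ℝ) :
    p * (k / √(2 * p)) + (1 - p) * (k / √(2 * (1 - p))) = k * (√p + √(1 - p)) / √2 := by
  rw [← mul_div_assoc, ← mul_div_assoc, mul_div_right_comm p, mul_div_right_comm (1 - p),
    div_sqrt_two_mul, div_sqrt_two_mul]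
  ring

lemma one_half_le_exp_neg {c : ℝ} (hc : c ≤ 1 / 2) : 1 / 2 ≤ exp (-c) := by
  linarith [add_one_le_exp (-c)]

/-- With `pₙ = 1/2 + (−1)ⁿ δₙ`, `δₙ = e^{−1/(n+1)}√(e^{1/(n+1)} − 1)`, `qₙ(1) = pₙ`,
`qₙ(0) = 1 − pₙ`, and the multiplier values `M(n)(x) = e^{1/(2(n+1))}√(2qₙ(x))`,
`N(n)(x) = e^{1/(2(n+1))}/√(2qₙ(x))`, we have, for all `n ≥ 1`:
`(1/2)M(n)(1) + (1/2)M(n)(0) = 1` and `pₙ N(n)(1) + (1−pₙ) N(n)(0) = 1`. -/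
theorem stmt12 (n : ℕ) (hn : 1 ≤ n)
    (δ p : ℝ) (q : Bool → ℝ) (M N : Bool → ℝ)
    (hδ : δ = exp (-(1 / (n + 1 : ℝ))) * Real.sqrt (exp (1 / (n + 1 : ℝ)) - 1))
    (hp : p = 1 / 2 + (-1 : ℝ) ^ n * δ)
    (hq1 : q true = p) (hq0 : q false = 1 - p)
    (hM : ∀ x, M x = exp (1 / (2 * (n + 1 : ℝ))) * Real.sqrt (2 * q x))
    (hN : ∀ x, N x = exp (1 / (2 * (n + 1 : ℝ))) / Real.sqrt (2 * q x)) :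
    (1 / 2) * M true + (1 / 2) * M false = 1 ∧
    p * N true + (1 - p) * N false = 1 := by
  set c : ℝ := 1 / (n + 1 : ℝ) with hc
  have hc0 : 0 ≤ c := by positivity
  have hc_half : c ≤ 1 / 2 := by
    rw [hc, div_le_div_iff₀ (by positivity) two_pos]
    have : (1 : ℝ) ≤ n := by exact_mod_cast hn
    linarith
  have hpq : p * (1 - p) = (exp (-c) - 1 / 2) ^ 2 := by
    rw [hp, half_add_neg_one_pow_mul_mul_one_sub, hδ, sq_exp_neg_mul_sqrt_exp_sub_one hc0]
    ring
  have hsum := sqrt_add_sqrt_one_sub_of_mul_one_sub_eq (one_half_le_exp_neg hc_half) hpq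
  have hhalf : 1 / (2 * (n + 1 : ℝ)) = c / 2 := by rw [hc]; field_simp
  have hone : exp (c / 2) * (√p + √(1 - p)) / √2 = 1 := by
    rw [hsum, sqrt_mul zero_le_two, mul_div_assoc, mul_div_cancel_left₀ _ (by positivity),
      ← exp_half, ← exp_add, neg_div, add_neg_cancel, exp_zero]
  simp only [hM, hN, hq1, hq0, hhalf]
  exact ⟨(half_mul_sqrt_two_mul_add _ p).trans hone, (mul_div_sqrt_two_mul_add _ p).trans hone⟩
end

section
/- Let K = I ∩ J be the nonempty intersection of two interval forecasts I = [p̲, p̄] and J = [q̲, q̄] with q̲ < p̲ ≤ q̄ < p̄ (so K = [p̲, q̄]). Let D be a multiplier process with Ē_K(D(s)) ≤ 1 for all situations s. Define D_I(s)(1) := min{D(s)(1), 1}, D_I(s)(0) := max{D(s)(0), 1} and D_J(s)(1) := max{D(s)(1), 1}, D_J(s)(0) := min{D(s)(0), 1}. Then Ē_I(D_I(s)) ≤ 1 and Ē_J(D_J(s)) ≤ 1 for every situation s, and D(s) = D_I(s)·D_J(s) pointwise. -/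
lemma pexp_eq (p : ℝ) (f : Bool → ℝ) : pexp p f = f false + p * (f true - f false) := by
  unfold pexp; ring

lemma pexp_comp_not (p : ℝ) (f : Bool → ℝ) : pexp (1 - p) (f ∘ not) = pexp p f := by
  unfold pexp; simp only [Function.comp_apply, Bool.not_true, Bool.not_false]; ring

lemma continuous_pexp (f : Bool → ℝ) : Continuous fun p => pexp p f := by
  unfold pexp; fun_prop

lemma pexp_le_uexp {a b p : ℝ} (f : Bool → ℝ) (hp : p ∈ Set.Icc a b) :
    pexp p f ≤ uexp a b f :=
  le_csSup (isCompact_Icc.image (continuous_pexp f)).bddAbove ⟨p, hp, rfl⟩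

lemma uexp_eq_pexp_left {a b : ℝ} {f : Bool → ℝ} (hab : a ≤ b) (hf : f true ≤ f false) :
    uexp a b f = pexp a f := by
  refine IsGreatest.csSup_eq ⟨⟨a, Set.left_mem_Icc.2 hab, rfl⟩, ?_⟩
  rintro _ ⟨p, hp, rfl⟩
  simp only [pexp_eq]
  nlinarith [hp.1]

lemma uexp_eq_pexp_right {a b : ℝ} {f : Bool → ℝ} (hab : a ≤ b) (hf : f false ≤ f true) :
    uexp a b f = pexp b f := by
  refine IsGreatest.csSup_eq ⟨⟨b, Set.right_mem_Icc.2 hab, rfl⟩, ?_⟩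
  rintro _ ⟨p, hp, rfl⟩
  simp only [pexp_eq]
  nlinarith [hp.2]

lemma pexp_le_one_of_clip {p : ℝ} (hp : 0 ≤ p) {f g : Bool → ℝ}
    (hf : pexp p f ≤ 1) (htrue : g true = min (f true) 1) (hfalse : g false = max (f false) 1) :
    pexp p g ≤ 1 := by
  unfold pexp at hf ⊢
  rw [htrue, hfalse]
  rcases le_total (f false) 1 with h | h
  · rw [max_eq_right h]
    nlinarith [min_le_right (f true) 1]
  · rw [max_eq_left h]
    nlinarith [min_le_left (f true) 1]

theorem stmt14_general (pl pu ql qu : ℝ)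
    (h0 : 0 ≤ ql) (h1 : ql < pl) (h2 : pl ≤ qu) (h3 : qu < pu) (h4 : pu ≤ 1)
    (D : List Bool → Bool → ℝ)
    (hDK : ∀ s, uexp pl qu (D s) ≤ 1)
    (DI DJ : List Bool → Bool → ℝ)
    (hDI1 : ∀ s, DI s true = min (D s true) 1) (hDI0 : ∀ s, DI s false = max (D s false) 1)
    (hDJ1 : ∀ s, DJ s true = max (D s true) 1) (hDJ0 : ∀ s, DJ s false = min (D s false) 1) :
    (∀ s, uexp pl pu (DI s) ≤ 1) ∧
    (∀ s, uexp ql qu (DJ s) ≤ 1) ∧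
    (∀ s x, D s x = DI s x * DJ s x) := by
  have hpl : 0 ≤ pl := h0.trans h1.le
  have hqu : qu ≤ 1 := h3.le.trans h4
  have hDpl (s) : pexp pl (D s) ≤ 1 := (pexp_le_uexp _ ⟨le_rfl, h2⟩).trans (hDK s)
  have hDqu (s) : pexp qu (D s) ≤ 1 := (pexp_le_uexp _ ⟨h2, le_rfl⟩).trans (hDK s)
  refine ⟨fun s => ?_, fun s => ?_, fun s x => ?_⟩
  · have hmono : DI s true ≤ DI s false := by
      rw [hDI1, hDI0]; exact (min_le_right _ _).trans (le_max_right _ _)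
    rw [uexp_eq_pexp_left (h2.trans h3.le) hmono]
    exact pexp_le_one_of_clip hpl (hDpl s) (hDI1 s) (hDI0 s)
  · have hmono : DJ s false ≤ DJ s true := by
      rw [hDJ0, hDJ1]; exact (min_le_right _ _).trans (le_max_right _ _)
    rw [uexp_eq_pexp_right (h1.le.trans h2) hmono, ← pexp_comp_not]
    exact pexp_le_one_of_clip (f := D s ∘ not) (sub_nonneg.2 hqu)
      (by rw [pexp_comp_not]; exact hDqu s) (hDJ0 s) (hDJ1 s)
  · cases x
    · rw [hDI0, hDJ0, mul_comm, min_mul_max, mul_one]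
    · rw [hDI1, hDJ1, min_mul_max, mul_one]

/-- Factorisation of a supermartingale multiplier for the intersection `K = I ∩ J` of
two overlapping interval forecasts `I = [p̲, p̄]` and `J = [q̲, q̄]` with
`q̲ < p̲ ≤ q̄ < p̄`, so `K = [p̲, q̄]`: if `Ē_K(D(s)) ≤ 1` for all situations `s`, then
setting `D_I(s)(1) = min{D(s)(1),1}`, `D_I(s)(0) = max{D(s)(0),1}` and
`D_J(s)(1) = max{D(s)(1),1}`, `D_J(s)(0) = min{D(s)(0),1}`, we get `Ē_I(D_I(s)) ≤ 1`,
`Ē_J(D_J(s)) ≤ 1`, and `D(s) = D_I(s)·D_J(s)` pointwise. -/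
theorem stmt14 (pl pu ql qu : ℝ)
    (h0 : 0 ≤ ql) (h1 : ql < pl) (h2 : pl ≤ qu) (h3 : qu < pu) (h4 : pu ≤ 1)
    (D : List Bool → Bool → ℝ)
    (hDpos : ∀ s x, 0 ≤ D s x)
    (hDK : ∀ s, uexp pl qu (D s) ≤ 1)
    (DI DJ : List Bool → Bool → ℝ)
    (hDI1 : ∀ s, DI s true = min (D s true) 1) (hDI0 : ∀ s, DI s false = max (D s false) 1)
    (hDJ1 : ∀ s, DJ s true = max (D s true) 1) (hDJ0 : ∀ s, DJ s false = min (D s false) 1) :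
    (∀ s, uexp pl pu (DI s) ≤ 1) ∧
    (∀ s, uexp ql qu (DJ s) ≤ 1) ∧
    (∀ s x, D s x = DI s x * DJ s x) :=
  stmt14_general pl pu ql qu h0 h1 h2 h3 h4 D hDK DI DJ hDI1 hDI0 hDJ1 hDJ0
end
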